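/- Let G be a connected finite simple graph on the vertex set {1, …, N} with edge set E, maximum degree d_max and Laplacian L; let M ≥ 2·d_max − 1 be an integer, γ ∈ (0, 1), s_1, …, s_M distinct nonzero reals, and p₀ an integer with 0 ≤ p₀ ≤ M − 1. Let (c_t)_{t∈ℕ} be a sequence of mutually independent random variables, each taking values in the maps E → {1, …, M}, such that for every t: almost surely any two distinct adjacent edges receive different colors under c_t, and ℙ(c_t(e) = k) = 1/M for every edge e and every k. For each t and k let L^k(t) be the Laplacian of the subgraph of edges e with c_t(e) = k. Let each agent i carry r_i(t) = (r_i^1(t), …, r_i^M(t)) ∈ ℝ^M with r_i(0) in the column span of the Vandermonde matrix Φ_{p₀}, updated by r̃_i^k(t+1) = r_i^k(t) + γ · Σ_{j : {i,j}∈E} 1(c_t({i,j}) = k)(r_j^k(t) − r_i^k(t)) followed by r_i(t+1) = T̄_{p₀} r̃_i(t+1). Then, almost surely, for every agent i ∈ {1, …, N} and every channel k ∈ {1, …, M}, lim_{t→∞} r_i^k(t) = (1/N) Σ_{j=1}^N r_j^k(0). -/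

import Mathlib

open Matrix MeasureTheory ProbabilityTheory Filter

/-- The `M × (p+1)` Vandermonde matrix with entries `(Φ_p)_{k,ℓ} = s_k^{ℓ−1}`. -/
def vandMat (M p : ℕ) (s : Fin M → ℝ) : Matrix (Fin M) (Fin (p + 1)) ℝ :=
  Matrix.of fun k ℓ => s k ^ (ℓ : ℕ)

/-- The orthogonal projection matrix `T̄_p = Φ_p (Φ_pᵀ Φ_p)⁻¹ Φ_pᵀ` onto the column
span of the Vandermonde matrix `Φ_p`. -/
noncomputable def projMat (M p : ℕ) (s : Fin M → ℝ) : Matrix (Fin M) (Fin M) ℝ :=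
  vandMat M p s * ((vandMat M p s).transpose * vandMat M p s)⁻¹ * (vandMat M p s).transpose

/-!
The proof runs on the Lyapunov function `V(t) = ∑ᵢ ‖rᵢ(t) - r̄‖²`, where `r̄` is the average of
the initial states. Both halves of the update preserve `∑ᵢ rᵢ(t)`: the consensus step is
antisymmetric along edges, and `T̄` fixes the column span of `Φ`, which contains every `rᵢ(0)`.
Since `c_t` is proper, on each channel an agent averages with at most one neighbour, and then the
consensus step lowers `V` by exactly `γ(1-γ)` times the colored Dirichlet energy; the orthogonal
projection `T̄` fixes `r̄` and does not increase `V`. As `c_t` is uniform and independent of the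
past, which determines `r(t)`, the expected colored energy is `1/M` times the full Dirichlet
energy, and that dominates `λ V` for the spectral gap `λ > 0` of the connected graph. Hence
`E V(t+1) ≤ (1 - γ(1-γ)λ/M) E V(t)`, so `∑ₜ V(t)` has finite expectation and `V(t) → 0` almost
surely.
-/

section Projection

variable {m n : Type*} [Fintype m] [Fintype n] [DecidableEq n]

theorem Matrix.isUnit_det_transpose_mul_self {A : Matrix m n ℝ}
    (hA : Function.Injective A.mulVec) : IsUnit (Aᵀ * A).det := by
  rw [← isUnit_iff_isUnit_det, ← mulVec_injective_iff_isUnit]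
  have hker : LinearMap.ker (Aᵀ * A).mulVecLin = ⊥ := by
    rw [ker_mulVecLin_transpose_mul_self]
    exact LinearMap.ker_eq_bot.mpr hA
  exact LinearMap.ker_eq_bot.mp hker

theorem Matrix.dotProduct_mulVec_self_le {P : Matrix m m ℝ} (hsymm : Pᵀ = P)
    (hidem : P * P = P) (v : m → ℝ) :
    (P *ᵥ v) ⬝ᵥ (P *ᵥ v) ≤ v ⬝ᵥ v := by
  have horth : (P *ᵥ v) ⬝ᵥ (v - P *ᵥ v) = 0 := calc
    _ = v ⬝ᵥ (Pᵀ *ᵥ (v - P *ᵥ v)) := by rw [dotProduct_mulVec, vecMul_transpose]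
    _ = 0 := by rw [hsymm, mulVec_sub, mulVec_mulVec, hidem, sub_self, dotProduct_zero]
  have hpyth : v ⬝ᵥ v = (P *ᵥ v) ⬝ᵥ (P *ᵥ v) + (v - P *ᵥ v) ⬝ᵥ (v - P *ᵥ v) := by
    simp only [sub_dotProduct, dotProduct_sub] at horth ⊢
    rw [dotProduct_comm v (P *ᵥ v)]
    linarith
  have := dotProduct_self_star_nonneg (v - P *ᵥ v)
  simp only [star_trivial] at this
  linarith

end Projection

section Vandermonde

variable {M p : ℕ} {s : Fin M → ℝ}

theorem vandMat_mulVec_injective (hs : Function.Injective s) (hp : p + 1 ≤ M) :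
    Function.Injective (vandMat M p s).mulVec := by
  intro a b hab
  rw [← sub_eq_zero, ← Matrix.mulVec_sub] at hab
  exact sub_eq_zero.mp <| Matrix.eq_zero_of_forall_index_sum_pow_mul_eq_zero
    (hs.comp (Fin.castLE_injective hp)) fun k => congrFun hab (Fin.castLE hp k)

theorem projMat_transpose : (projMat M p s)ᵀ = projMat M p s := by
  simp only [projMat, Matrix.transpose_mul, Matrix.transpose_transpose,
    Matrix.transpose_nonsing_inv, Matrix.mul_assoc]

theorem projMat_mul_vandMat (hs : Function.Injective s) (hp : p + 1 ≤ M) :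
    projMat M p s * vandMat M p s = vandMat M p s := by
  rw [projMat, Matrix.mul_assoc (vandMat M p s * _), Matrix.mul_assoc, Matrix.nonsing_inv_mul _
    (Matrix.isUnit_det_transpose_mul_self (vandMat_mulVec_injective hs hp)), Matrix.mul_one]

theorem projMat_mul_self (hs : Function.Injective s) (hp : p + 1 ≤ M) :
    projMat M p s * projMat M p s = projMat M p s := by
  nth_rewrite 2 [projMat]
  rw [← Matrix.mul_assoc, ← Matrix.mul_assoc, projMat_mul_vandMat hs hp, ← projMat]

theorem projMat_mulVec_of_mem_span (hs : Function.Injective s) (hp : p + 1 ≤ M) {x : Fin M → ℝ}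
    (hx : x ∈ Submodule.span ℝ
      (Set.range fun ℓ : Fin (p + 1) => fun k : Fin M => vandMat M p s k ℓ)) :
    projMat M p s *ᵥ x = x := by
  obtain ⟨a, rfl⟩ := (Submodule.mem_span_range_iff_exists_fun ℝ).mp hx
  have : ∑ ℓ, a ℓ • (fun k => vandMat M p s k ℓ) = vandMat M p s *ᵥ a := by
    ext k; simp [Matrix.mulVec, dotProduct, mul_comm]
  rw [this, Matrix.mulVec_mulVec, projMat_mul_vandMat hs hp]

end Vandermonde

def sqDeviation {V K : Type*} [Fintype V] [Fintype K] (x : V → K → ℝ) (a : K → ℝ) : ℝ :=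
  ∑ i, ∑ k, (x i k - a k) ^ 2

section SqDeviation

variable {V K : Type*} [Fintype V] [Fintype K]

theorem sqDeviation_nonneg (x : V → K → ℝ) (a : K → ℝ) : 0 ≤ sqDeviation x a := by
  unfold sqDeviation
  positivity

theorem sq_le_sqDeviation (x : V → K → ℝ) (a : K → ℝ) (i : V) (k : K) :
    (x i k - a k) ^ 2 ≤ sqDeviation x a :=
  (Finset.single_le_sum (fun k _ => sq_nonneg (x i k - a k)) (Finset.mem_univ k)).trans
    (Finset.single_le_sum (f := fun i => ∑ k, (x i k - a k) ^ 2)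
      (fun _ _ => Finset.sum_nonneg fun _ _ => sq_nonneg _) (Finset.mem_univ i))

theorem sqDeviation_mulVec_le {T : Matrix K K ℝ} (hsymm : Tᵀ = T) (hidem : T * T = T)
    {a : K → ℝ} (ha : T *ᵥ a = a) (x : V → K → ℝ) :
    sqDeviation (fun i => T *ᵥ x i) a ≤ sqDeviation x a := by
  refine Finset.sum_le_sum fun i _ => ?_
  have h := Matrix.dotProduct_mulVec_self_le hsymm hidem (x i - a)
  rw [Matrix.mulVec_sub, ha] at h
  simpa [dotProduct, sq] using h

theorem tendsto_apply_of_tendsto_sqDeviation {x : ℕ → V → K → ℝ} {a : K → ℝ}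
    (h : Tendsto (fun t => sqDeviation (x t) a) atTop (nhds 0)) (i : V) (k : K) :
    Tendsto (fun t => x t i k) atTop (nhds (a k)) := by
  rw [tendsto_iff_norm_sub_tendsto_zero]
  refine squeeze_zero (fun t => norm_nonneg _) (fun t => ?_)
    (by simpa using (Real.continuous_sqrt.tendsto 0).comp h)
  rw [Real.norm_eq_abs, ← Real.sqrt_sq_eq_abs]
  exact Real.sqrt_le_sqrt (sq_le_sqDeviation (x t) a i k)

end SqDeviation

open Finset in
theorem Finset.sq_sum_of_card_le_one {α R : Type*} [CommSemiring R] {s : Finset α}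
    (hs : #s ≤ 1) (f : α → R) : (∑ i ∈ s, f i) ^ 2 = ∑ i ∈ s, f i ^ 2 := by
  rcases s.eq_empty_or_nonempty with rfl | hne
  · simp
  · obtain ⟨a, rfl⟩ := card_eq_one.mp (le_antisymm hs hne.card_pos)
    simp

theorem exists_pos_mul_norm_sq_le {E : Type*} [NormedAddCommGroup E] [NormedSpace ℝ E]
    [FiniteDimensional ℝ E] {Q : E → ℝ} (hQ : Continuous Q)
    (hhom : ∀ (c : ℝ) x, Q (c • x) = c ^ 2 * Q x) (hpos : ∀ x, x ≠ 0 → 0 < Q x) :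
    ∃ l > 0, ∀ x, l * ‖x‖ ^ 2 ≤ Q x := by
  have hQ0 : Q 0 = 0 := by simpa using hhom 0 0
  rcases subsingleton_or_nontrivial E with hE | hE
  · exact ⟨1, one_pos, fun x => by simp [Subsingleton.elim x 0, hQ0]⟩
  obtain ⟨u, hu, hmin⟩ := (isCompact_sphere (0 : E) 1).exists_isMinOn
    (NormedSpace.sphere_nonempty.mpr zero_le_one) hQ.continuousOn
  have hu0 : u ≠ 0 := ne_zero_of_mem_sphere one_ne_zero ⟨u, hu⟩
  refine ⟨Q u, hpos u hu0, fun x => ?_⟩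
  rcases eq_or_ne x 0 with rfl | hx
  · simp [hQ0]
  have hx' : ‖x‖⁻¹ • x ∈ Metric.sphere (0 : E) 1 := by
    simp [norm_smul, inv_mul_cancel₀ (norm_ne_zero_iff.mpr hx)]
  calc Q u * ‖x‖ ^ 2 ≤ Q (‖x‖⁻¹ • x) * ‖x‖ ^ 2 := by gcongr; exact hmin hx'
    _ = Q x := by
      rw [hhom, mul_comm, ← mul_assoc, ← mul_pow, mul_inv_cancel₀ (norm_ne_zero_iff.mpr hx),
        one_pow, one_mul]

namespace SimpleGraph

section EdgeColoring

variable {V K : Type*} (G : SimpleGraph V)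

def IsProperEdgeColoring (χ : Sym2 V → K) : Prop :=
  ∀ e ∈ G.edgeSet, ∀ e' ∈ G.edgeSet, e ≠ e' → (∃ v, v ∈ e ∧ v ∈ e') → χ e ≠ χ e'

variable {G}

theorem IsProperEdgeColoring.eq_of_adj {χ : Sym2 V → K} (hχ : G.IsProperEdgeColoring χ)
    {i j j' : V} (hj : G.Adj i j) (hj' : G.Adj i j') (h : χ s(i, j) = χ s(i, j')) : j = j' := by
  by_contra hne
  exact hχ _ hj _ hj' (fun he => hne (Sym2.congr_right.mp he))
    ⟨i, Sym2.mem_mk_left i j, Sym2.mem_mk_left i j'⟩ h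

end EdgeColoring

section Consensus

variable {V K : Type*} [Fintype V] [DecidableEq K] (G : SimpleGraph V) [DecidableRel G.Adj]

theorem two_mul_sum_sum_neighborFinset {R : Type*} [CommSemiring R] (F : V → V → R) :
    2 * ∑ i, ∑ j ∈ G.neighborFinset i, F i j
      = ∑ i, ∑ j ∈ G.neighborFinset i, (F i j + F j i) := by
  have hcomm : ∑ i, ∑ j ∈ G.neighborFinset i, F i j
      = ∑ i, ∑ j ∈ G.neighborFinset i, F j i := by
    simp only [neighborFinset_eq_filter, Finset.sum_filter]
    rw [Finset.sum_comm]
    simp only [G.adj_comm]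
  simp only [Finset.sum_add_distrib, ← hcomm, two_mul]

/-- The channel-wise consensus update `r̃(t+1)` of the paper, on the edges colored by `χ`. -/
def consensusStep (γ : ℝ) (χ : Sym2 V → K) (x : V → K → ℝ) : V → K → ℝ :=
  fun i k => x i k + γ * ∑ j ∈ G.neighborFinset i,
    (if χ s(i, j) = k then (1 : ℝ) else 0) * (x j k - x i k)

/-- `∑ₖ 2 (xᵏ)ᵀ Lᵏ xᵏ`, where `Lᵏ` is the Laplacian of the edges of color `k`. -/
def coloredEnergy [Fintype K] (χ : Sym2 V → K) (x : V → K → ℝ) : ℝ :=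
  ∑ k, ∑ i, ∑ j ∈ G.neighborFinset i, (if χ s(i, j) = k then (1 : ℝ) else 0) * (x i k - x j k) ^ 2

/-- The update `r(t+1) = T̄ r̃(t+1)` of the paper. -/
def encodedStep [Fintype K] (T : Matrix K K ℝ) (γ : ℝ) (χ : Sym2 V → K) (x : V → K → ℝ) :
    V → K → ℝ :=
  fun i => T *ᵥ G.consensusStep γ χ x i

variable {G}

theorem sum_sum_neighborFinset_boole_mul_sub (χ : Sym2 V → K) (k : K) (y : V → ℝ) :
    ∑ i, ∑ j ∈ G.neighborFinset i, (if χ s(i, j) = k then (1 : ℝ) else 0) * (y j - y i) = 0 := by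
  have h := G.two_mul_sum_sum_neighborFinset
    fun i j => (if χ s(i, j) = k then (1 : ℝ) else 0) * (y j - y i)
  have hanti : ∀ i j, (if χ s(i, j) = k then (1 : ℝ) else 0) * (y j - y i)
      + (if χ s(j, i) = k then (1 : ℝ) else 0) * (y i - y j) = 0 := fun i j => by
    rw [Sym2.eq_swap]; ring
  simp only [hanti, Finset.sum_const_zero, mul_eq_zero, two_ne_zero, false_or] at h
  exact h

theorem sq_sum_neighborFinset_boole_mul {χ : Sym2 V → K} (hχ : G.IsProperEdgeColoring χ)
    (k : K) (i : V) (f : V → ℝ) :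
    (∑ j ∈ G.neighborFinset i, (if χ s(i, j) = k then (1 : ℝ) else 0) * f j) ^ 2
      = ∑ j ∈ G.neighborFinset i, (if χ s(i, j) = k then (1 : ℝ) else 0) * f j ^ 2 := by
  simp only [boole_mul, ← Finset.sum_filter]
  refine Finset.sq_sum_of_card_le_one (Finset.card_le_one.mpr fun j hj j' hj' => ?_) f
  simp only [Finset.mem_filter, mem_neighborFinset] at hj hj'
  exact hχ.eq_of_adj hj.1 hj'.1 (hj.2.trans hj'.2.symm)

theorem sum_sq_consensus_add {χ : Sym2 V → K} (hχ : G.IsProperEdgeColoring χ) (γ : ℝ) (k : K)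
    (y : V → ℝ) :
    ∑ i, (y i + γ * ∑ j ∈ G.neighborFinset i,
        (if χ s(i, j) = k then (1 : ℝ) else 0) * (y j - y i)) ^ 2
      + γ * (1 - γ) * ∑ i, ∑ j ∈ G.neighborFinset i,
        (if χ s(i, j) = k then (1 : ℝ) else 0) * (y i - y j) ^ 2
      = ∑ i, y i ^ 2 := by
  set A := ∑ i, ∑ j ∈ G.neighborFinset i,
    (if χ s(i, j) = k then (1 : ℝ) else 0) * (y i - y j) ^ 2
  have hcross : 2 * ∑ i, y i * ∑ j ∈ G.neighborFinset i,
      (if χ s(i, j) = k then (1 : ℝ) else 0) * (y j - y i) = -A := by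
    simp_rw [Finset.mul_sum _ _ (y _)]
    rw [G.two_mul_sum_sum_neighborFinset, ← Finset.sum_neg_distrib]
    refine Finset.sum_congr rfl fun i _ => ?_
    rw [← Finset.sum_neg_distrib]
    refine Finset.sum_congr rfl fun j _ => ?_
    rw [Sym2.eq_swap]
    ring
  have hquad : ∑ i, (∑ j ∈ G.neighborFinset i,
      (if χ s(i, j) = k then (1 : ℝ) else 0) * (y j - y i)) ^ 2 = A := by
    simp only [sq_sum_neighborFinset_boole_mul hχ, A]
    exact Finset.sum_congr rfl fun i _ => Finset.sum_congr rfl fun j _ => by ring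
  have hexpand : ∀ u : V → ℝ, ∑ i, (y i + γ * u i) ^ 2
      = ∑ i, y i ^ 2 + γ * (2 * ∑ i, y i * u i) + γ ^ 2 * ∑ i, u i ^ 2 := fun u => by
    simp only [Finset.mul_sum, ← Finset.sum_add_distrib]
    exact Finset.sum_congr rfl fun i _ => by ring
  rw [hexpand, hcross, hquad]
  ring

theorem sum_consensusStep (γ : ℝ) (χ : Sym2 V → K) (x : V → K → ℝ) :
    ∑ i, G.consensusStep γ χ x i = ∑ i, x i := by
  ext k
  simp only [Finset.sum_apply, consensusStep, Finset.sum_add_distrib, ← Finset.mul_sum,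
    sum_sum_neighborFinset_boole_mul_sub, mul_zero, add_zero]

theorem sqDeviation_consensusStep_add [Fintype K] {χ : Sym2 V → K}
    (hχ : G.IsProperEdgeColoring χ) (γ : ℝ) (x : V → K → ℝ) (a : K → ℝ) :
    sqDeviation (G.consensusStep γ χ x) a + γ * (1 - γ) * G.coloredEnergy χ x
      = sqDeviation x a := by
  have hswap : ∀ y : V → K → ℝ, sqDeviation y a = ∑ k, ∑ i, (y i k - a k) ^ 2 :=
    fun y => Finset.sum_comm
  rw [hswap, hswap, coloredEnergy, Finset.mul_sum, ← Finset.sum_add_distrib]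
  refine Finset.sum_congr rfl fun k _ => ?_
  have h := sum_sq_consensus_add hχ γ k (fun i => x i k - a k)
  simp only [sub_sub_sub_cancel_right] at h
  simpa only [consensusStep, add_sub_right_comm] using h

theorem sum_encodedStep [Fintype K] (T : Matrix K K ℝ) (γ : ℝ) (χ : Sym2 V → K)
    (x : V → K → ℝ) : ∑ i, G.encodedStep T γ χ x i = T *ᵥ ∑ i, x i := by
  simp only [encodedStep, ← Matrix.mulVec_sum, sum_consensusStep]

theorem sqDeviation_encodedStep_add_le [Fintype K] {χ : Sym2 V → K}
    (hχ : G.IsProperEdgeColoring χ) {T : Matrix K K ℝ} (hsymm : Tᵀ = T) (hidem : T * T = T)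
    {a : K → ℝ} (ha : T *ᵥ a = a) (γ : ℝ) (x : V → K → ℝ) :
    sqDeviation (G.encodedStep T γ χ x) a + γ * (1 - γ) * G.coloredEnergy χ x
      ≤ sqDeviation x a := by
  have hproj : sqDeviation (G.encodedStep T γ χ x) a ≤ sqDeviation (G.consensusStep γ χ x) a :=
    sqDeviation_mulVec_le hsymm hidem ha _
  linarith [sqDeviation_consensusStep_add hχ γ x a]

end Consensus

section SpectralGap

variable {V : Type*} [Fintype V] (G : SimpleGraph V) [DecidableRel G.Adj]

/-- `∑ₖ 2 (xᵏ)ᵀ L xᵏ`, where `L` is the Laplacian of `G`. -/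
def edgeEnergy {K : Type*} [Fintype K] (x : V → K → ℝ) : ℝ :=
  ∑ k, ∑ i, ∑ j ∈ G.neighborFinset i, (x i k - x j k) ^ 2

theorem sum_sum_neighborFinset_sq_sub [DecidableEq V] (x : V → ℝ) :
    ∑ i, ∑ j ∈ G.neighborFinset i, (x i - x j) ^ 2
      = 2 * Matrix.toLinearMap₂' ℝ (G.lapMatrix ℝ) x x := by
  rw [lapMatrix_toLinearMap₂']
  simp only [neighborFinset_eq_filter, Finset.sum_filter]
  ring

variable {G}

theorem Connected.eq_zero_of_sum_sum_neighborFinset_sq_sub_eq_zero (hG : G.Connected)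
    {x : V → ℝ} (hsum : ∑ i, x i = 0)
    (henergy : ∑ i, ∑ j ∈ G.neighborFinset i, (x i - x j) ^ 2 = 0) : x = 0 := by
  classical
  rw [sum_sum_neighborFinset_sq_sub, mul_eq_zero, or_iff_right two_ne_zero,
    lapMatrix_toLinearMap₂'_apply'_eq_zero_iff_forall_reachable] at henergy
  obtain ⟨i₀⟩ := hG.nonempty
  have hconst : ∀ i, x i = x i₀ := fun i => henergy i i₀ (hG.preconnected i i₀)
  have hx₀ : x i₀ = 0 := by
    simp only [hconst, Finset.sum_const, Finset.card_univ, nsmul_eq_mul, mul_eq_zero,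
      Nat.cast_eq_zero] at hsum
    exact hsum.resolve_left (Fintype.card_pos_iff.mpr ⟨i₀⟩).ne'
  funext i
  rw [hconst, hx₀, Pi.zero_apply]

theorem Connected.exists_pos_mul_sum_sq_le (hG : G.Connected) :
    ∃ l > 0, ∀ x : V → ℝ, ∑ i, x i = 0 →
      l * ∑ i, x i ^ 2 ≤ ∑ i, ∑ j ∈ G.neighborFinset i, (x i - x j) ^ 2 := by
  set Q : EuclideanSpace ℝ V → ℝ := fun z =>
    ∑ i, ∑ j ∈ G.neighborFinset i, (z i - z j) ^ 2 + (∑ i, z i) ^ 2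
  have hhom : ∀ (c : ℝ) z, Q (c • z) = c ^ 2 * Q z := fun c z => by
    simp only [Q, PiLp.smul_apply, smul_eq_mul, ← mul_sub, mul_pow, ← Finset.mul_sum, mul_add]
  have hpos : ∀ z, z ≠ 0 → 0 < Q z := by
    intro z hz
    have henergy : 0 ≤ ∑ i, ∑ j ∈ G.neighborFinset i, (z i - z j) ^ 2 := by positivity
    refine (add_nonneg henergy (sq_nonneg _)).lt_of_ne fun hQ => hz ?_
    have h := (add_eq_zero_iff_of_nonneg henergy (sq_nonneg _)).mp hQ.symm
    ext i
    exact congrFun (hG.eq_zero_of_sum_sum_neighborFinset_sq_sub_eq_zero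
      (pow_eq_zero_iff two_ne_zero |>.mp h.2) h.1) i
  obtain ⟨l, hl, hQ⟩ := exists_pos_mul_norm_sq_le (by fun_prop) hhom hpos
  refine ⟨l, hl, fun x hx => ?_⟩
  simpa [Q, EuclideanSpace.real_norm_sq_eq, hx] using hQ (WithLp.toLp 2 x)

theorem Connected.exists_pos_mul_sqDeviation_le {K : Type*} [Fintype K] (hG : G.Connected) :
    ∃ l > 0, ∀ (x : V → K → ℝ) (a : K → ℝ), ∑ i, x i = Fintype.card V • a →
      l * sqDeviation x a ≤ G.edgeEnergy x := by
  obtain ⟨l, hl, hgap⟩ := hG.exists_pos_mul_sum_sq_le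
  refine ⟨l, hl, fun x a hx => ?_⟩
  rw [sqDeviation, Finset.sum_comm, Finset.mul_sum]
  refine Finset.sum_le_sum fun k _ => ?_
  have hk : ∑ i, (x i k - a k) = 0 := by
    have := congrFun hx k
    simp only [Finset.sum_apply, Pi.smul_apply, nsmul_eq_mul] at this
    simp [Finset.sum_sub_distrib, this]
  simpa only [sub_sub_sub_cancel_right] using hgap (fun i => x i k - a k) hk

end SpectralGap

end SimpleGraph

section History

variable {Ω β : Type*} {c : ℕ → Ω → β}

def history (c : ℕ → Ω → β) (t : ℕ) (ω : Ω) : Fin t → β := fun u => c u ω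

theorem exists_eq_comp_history {α : Type*} {r : ℕ → Ω → α} (F : β → α → α) {x₀ : α}
    (h0 : ∀ ω, r 0 ω = x₀) (hsucc : ∀ t ω, r (t + 1) ω = F (c t ω) (r t ω)) (t : ℕ) :
    ∃ g : (Fin t → β) → α, ∀ ω, r t ω = g (history c t ω) := by
  induction t with
  | zero => exact ⟨fun _ => x₀, h0⟩
  | succ t ih =>
    obtain ⟨g, hg⟩ := ih
    exact ⟨fun v => F (v (Fin.last t)) (g (Fin.init v)), fun ω => by rw [hsucc, hg]; rfl⟩

variable [MeasurableSpace Ω] {μ : Measure Ω} [MeasurableSpace β]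

theorem measurable_history (hc : ∀ t, Measurable (c t)) (t : ℕ) : Measurable (history c t) :=
  measurable_pi_lambda _ fun u => hc u

theorem ProbabilityTheory.iIndepFun.indepFun_history (hind : iIndepFun c μ)
    (hc : ∀ t, Measurable (c t)) (t : ℕ) : IndepFun (c t) (history c t) μ := by
  have h := hind.indepFun_finset {t} (Finset.range t) (by simp) hc
  exact h.comp (φ := fun v : ({t} : Finset ℕ) → β => v ⟨t, Finset.mem_singleton_self t⟩)
    (ψ := fun (v : Finset.range t → β) (u : Fin t) => v ⟨u, Finset.mem_range.mpr u.2⟩)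
    (measurable_pi_apply _) (measurable_pi_lambda _ fun _ => measurable_pi_apply _)

variable [Finite β] [MeasurableSingletonClass β] [IsFiniteMeasure μ]

theorem integrable_comp_history (hc : ∀ t, Measurable (c t)) {t : ℕ} (φ : (Fin t → β) → ℝ) :
    Integrable (fun ω => φ (history c t ω)) μ :=
  Integrable.of_finite.comp_measurable (measurable_history hc t)

theorem integrable_comp_prod_history (hc : ∀ t, Measurable (c t)) {t : ℕ}
    (φ : β × (Fin t → β) → ℝ) : Integrable (fun ω => φ (c t ω, history c t ω)) μ :=
  Integrable.of_finite.comp_measurable ((hc t).prodMk (measurable_history hc t))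

theorem integral_mul_comp_history (hind : iIndepFun c μ) (hc : ∀ t, Measurable (c t)) (t : ℕ)
    (φ : β → ℝ) (ψ : (Fin t → β) → ℝ) :
    ∫ ω, φ (c t ω) * ψ (history c t ω) ∂μ
      = (∫ ω, φ (c t ω) ∂μ) * ∫ ω, ψ (history c t ω) ∂μ :=
  ((hind.indepFun_history hc t).comp (measurable_of_finite φ)
    (measurable_of_finite ψ)).integral_mul_eq_mul_integral
    (Integrable.of_finite.comp_measurable (hc t)).aestronglyMeasurable
    (integrable_comp_history hc ψ).aestronglyMeasurable

end History

section Uniform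

variable {Ω σ K : Type*} [MeasurableSpace Ω] {μ : Measure Ω} [IsProbabilityMeasure μ]
  [Finite σ] [Fintype K] [DecidableEq K] [MeasurableSpace K] [MeasurableSingletonClass K]
  {c : ℕ → Ω → σ → K}

theorem integral_boole_mul_comp_history (hind : iIndepFun c μ) (hc : ∀ t, Measurable (c t))
    {t : ℕ} {e : σ} {k : K} (hunif : μ {ω | c t ω e = k} = 1 / (Fintype.card K : ENNReal))
    (ψ : (Fin t → σ → K) → ℝ) :
    ∫ ω, (if c t ω e = k then (1 : ℝ) else 0) * ψ (history c t ω) ∂μ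
      = (Fintype.card K : ℝ)⁻¹ * ∫ ω, ψ (history c t ω) ∂μ := by
  rw [integral_mul_comp_history hind hc t (fun χ => if χ e = k then (1 : ℝ) else 0)]
  congr 1
  have hmeas : MeasurableSet {ω | c t ω e = k} :=
    (measurable_pi_apply e).comp (hc t) (measurableSet_singleton k)
  calc ∫ ω, (if c t ω e = k then (1 : ℝ) else 0) ∂μ
      = ∫ ω, {ω | c t ω e = k}.indicator 1 ω ∂μ := by
        congr 1; ext ω; simp [Set.indicator_apply]
    _ = (Fintype.card K : ℝ)⁻¹ := by
        simp [integral_indicator_one hmeas, Measure.real, hunif, ENNReal.toReal_inv]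

end Uniform

theorem MeasureTheory.ae_tendsto_zero_of_integral_succ_le {Ω : Type*} [MeasurableSpace Ω]
    {μ : Measure Ω} {X : ℕ → Ω → ℝ} (hX : ∀ t ω, 0 ≤ X t ω) (hint : ∀ t, Integrable (X t) μ)
    {q : ℝ} (hq : q < 1) (hdecay : ∀ t, ∫ ω, X (t + 1) ω ∂μ ≤ q * ∫ ω, X t ω ∂μ) :
    ∀ᵐ ω ∂μ, Tendsto (fun t => X t ω) atTop (nhds 0) := by
  have hint_nonneg : ∀ t, 0 ≤ ∫ ω, X t ω ∂μ := fun t => integral_nonneg (hX t)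
  have hsummable : Summable fun t => ∫ ω, X t ω ∂μ :=
    summable_of_ratio_norm_eventually_le hq (Eventually.of_forall fun t => by
      simpa only [Real.norm_of_nonneg (hint_nonneg _)] using hdecay t)
  have hmeas : ∀ t, AEMeasurable (fun ω => ENNReal.ofReal (X t ω)) μ :=
    fun t => (hint t).aemeasurable.ennreal_ofReal
  have hlint : ∫⁻ ω, ∑' t, ENNReal.ofReal (X t ω) ∂μ ≠ ⊤ := by
    rw [lintegral_tsum hmeas]
    simp_rw [← ofReal_integral_eq_lintegral_ofReal (hint _) (ae_of_all _ (hX _)),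
      ← ENNReal.ofReal_tsum_of_nonneg hint_nonneg hsummable]
    exact ENNReal.ofReal_ne_top
  filter_upwards [ae_lt_top' (AEMeasurable.tsum hmeas) hlint] with ω hω
  have h := (ENNReal.tendsto_toReal ENNReal.zero_ne_top).comp
    (ENNReal.tendsto_atTop_zero_of_tsum_ne_top hω.ne)
  simpa only [Function.comp_def, ENNReal.toReal_ofReal (hX _ ω), ENNReal.toReal_zero] using h

section Protocol

variable {V K Ω : Type*} [Fintype V] [Fintype K] [DecidableEq K] [MeasurableSpace K]
  [MeasurableSingletonClass K] {G : SimpleGraph V} [DecidableRel G.Adj] [MeasurableSpace Ω]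
  {μ : Measure Ω} [IsProbabilityMeasure μ] {c : ℕ → Ω → Sym2 V → K} {t : ℕ}

theorem integral_coloredEnergy (hind : iIndepFun c μ) (hc : ∀ t, Measurable (c t))
    (hunif : ∀ e ∈ G.edgeSet, ∀ k, μ {ω | c t ω e = k} = 1 / (Fintype.card K : ENNReal))
    (g : (Fin t → Sym2 V → K) → V → K → ℝ) :
    ∫ ω, G.coloredEnergy (c t ω) (g (history c t ω)) ∂μ
      = (Fintype.card K : ℝ)⁻¹ * ∫ ω, G.edgeEnergy (g (history c t ω)) ∂μ := by
  have hint : ∀ k i j, Integrable (fun ω => (if c t ω s(i, j) = k then (1 : ℝ) else 0) *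
      (g (history c t ω) i k - g (history c t ω) j k) ^ 2) μ := fun k i j =>
    integrable_comp_prod_history hc
      fun p => (if p.1 s(i, j) = k then (1 : ℝ) else 0) * (g p.2 i k - g p.2 j k) ^ 2
  have hint' : ∀ k i j, Integrable
      (fun ω => (g (history c t ω) i k - g (history c t ω) j k) ^ 2) μ := fun k i j =>
    integrable_comp_history hc fun v => (g v i k - g v j k) ^ 2
  simp only [SimpleGraph.coloredEnergy, SimpleGraph.edgeEnergy]
  rw [integral_finsetSum _ fun k _ => integrable_finsetSum _ fun i _ =>
      integrable_finsetSum _ fun j _ => hint k i j,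
    integral_finsetSum _ fun k _ => integrable_finsetSum _ fun i _ =>
      integrable_finsetSum _ fun j _ => hint' k i j, Finset.mul_sum]
  refine Finset.sum_congr rfl fun k _ => ?_
  rw [integral_finsetSum _ fun i _ => integrable_finsetSum _ fun j _ => hint k i j,
    integral_finsetSum _ fun i _ => integrable_finsetSum _ fun j _ => hint' k i j, Finset.mul_sum]
  refine Finset.sum_congr rfl fun i _ => ?_
  rw [integral_finsetSum _ fun j _ => hint k i j, integral_finsetSum _ fun j _ => hint' k i j,
    Finset.mul_sum]
  refine Finset.sum_congr rfl fun j hj => ?_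
  exact integral_boole_mul_comp_history hind hc
    (hunif _ (G.mem_edgeSet.mpr ((G.mem_neighborFinset _ _).mp hj)) k)
    fun v => (g v i k - g v j k) ^ 2

theorem integral_sqDeviation_encodedStep_le (hind : iIndepFun c μ) (hc : ∀ t, Measurable (c t))
    (hproper : ∀ᵐ ω ∂μ, G.IsProperEdgeColoring (c t ω))
    (hunif : ∀ e ∈ G.edgeSet, ∀ k, μ {ω | c t ω e = k} = 1 / (Fintype.card K : ENNReal))
    {T : Matrix K K ℝ} (hsymm : Tᵀ = T) (hidem : T * T = T) {a : K → ℝ} (ha : T *ᵥ a = a)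
    {γ : ℝ} (hγ : γ ∈ Set.Icc (0 : ℝ) 1) {l : ℝ} (g : (Fin t → Sym2 V → K) → V → K → ℝ)
    (hgap : ∀ ω, l * sqDeviation (g (history c t ω)) a ≤ G.edgeEnergy (g (history c t ω))) :
    ∫ ω, sqDeviation (G.encodedStep T γ (c t ω) (g (history c t ω))) a ∂μ
      ≤ (1 - γ * (1 - γ) * l / Fintype.card K) * ∫ ω, sqDeviation (g (history c t ω)) a ∂μ := by
  have hint_step := integrable_comp_prod_history hc (μ := μ)
    fun p => sqDeviation (G.encodedStep T γ p.1 (g p.2)) a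
  have hint_colored := integrable_comp_prod_history hc (μ := μ)
    fun p => G.coloredEnergy p.1 (g p.2)
  have hint_dev := integrable_comp_history hc (μ := μ) fun v => sqDeviation (g v) a
  have hint_edge := integrable_comp_history hc (μ := μ) fun v => G.edgeEnergy (g v)
  have hmono : ∫ ω, (sqDeviation (G.encodedStep T γ (c t ω) (g (history c t ω))) a
        + γ * (1 - γ) * G.coloredEnergy (c t ω) (g (history c t ω))) ∂μ
      ≤ ∫ ω, sqDeviation (g (history c t ω)) a ∂μ :=
    integral_mono_ae (hint_step.add (hint_colored.const_mul _)) hint_dev <| by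
      filter_upwards [hproper] with ω hω
      exact G.sqDeviation_encodedStep_add_le hω hsymm hidem ha γ _
  rw [integral_add hint_step (hint_colored.const_mul _), integral_const_mul,
    integral_coloredEnergy hind hc hunif g] at hmono
  have hgap_int : l * ∫ ω, sqDeviation (g (history c t ω)) a ∂μ
      ≤ ∫ ω, G.edgeEnergy (g (history c t ω)) ∂μ := by
    rw [← integral_const_mul]
    exact integral_mono (hint_dev.const_mul l) hint_edge hgap
  have hκ : 0 ≤ γ * (1 - γ) * (Fintype.card K : ℝ)⁻¹ :=
    mul_nonneg (mul_nonneg hγ.1 (sub_nonneg.mpr hγ.2)) (inv_nonneg.mpr (Nat.cast_nonneg _))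
  rw [div_eq_mul_inv]
  nlinarith [mul_le_mul_of_nonneg_left hgap_int hκ]

theorem ae_tendsto_sqDeviation_zero [Nonempty K] (hind : iIndepFun c μ)
    (hc : ∀ t, Measurable (c t)) (hproper : ∀ t, ∀ᵐ ω ∂μ, G.IsProperEdgeColoring (c t ω))
    (hunif : ∀ t, ∀ e ∈ G.edgeSet, ∀ k, μ {ω | c t ω e = k} = 1 / (Fintype.card K : ENNReal))
    {T : Matrix K K ℝ} (hsymm : Tᵀ = T) (hidem : T * T = T) {a : K → ℝ} (ha : T *ᵥ a = a)
    {γ : ℝ} (hγ : γ ∈ Set.Ioo (0 : ℝ) 1) {l : ℝ} (hl : 0 < l) {r : ℕ → Ω → V → K → ℝ}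
    {x₀ : V → K → ℝ} (hr0 : ∀ ω, r 0 ω = x₀)
    (hr_succ : ∀ t ω, r (t + 1) ω = G.encodedStep T γ (c t ω) (r t ω))
    (hgap : ∀ t ω, l * sqDeviation (r t ω) a ≤ G.edgeEnergy (r t ω)) :
    ∀ᵐ ω ∂μ, Tendsto (fun t => sqDeviation (r t ω) a) atTop (nhds 0) := by
  have hr_hist := exists_eq_comp_history (G.encodedStep T γ) hr0 hr_succ
  have hq : 1 - γ * (1 - γ) * l / Fintype.card K < 1 := by
    have hK : (0 : ℝ) < Fintype.card K := Nat.cast_pos.mpr Fintype.card_pos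
    linarith [div_pos (mul_pos (mul_pos hγ.1 (sub_pos.mpr hγ.2)) hl) hK]
  refine ae_tendsto_zero_of_integral_succ_le (fun t ω => sqDeviation_nonneg _ _) (fun t => ?_)
    hq fun t => ?_
  · obtain ⟨g, hg⟩ := hr_hist t
    simpa only [hg] using integrable_comp_history hc (μ := μ) fun v => sqDeviation (g v) a
  · obtain ⟨g, hg⟩ := hr_hist t
    simpa only [hr_succ, hg] using integral_sqDeviation_encodedStep_le hind hc (hproper t)
      (hunif t) hsymm hidem ha (Set.Ioo_subset_Icc_self hγ) g
      fun ω => by simpa only [hg] using hgap t ω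

end Protocol

theorem encoded_states_average_consensus_general
    {N : ℕ} (G : SimpleGraph (Fin N)) [DecidableRel G.Adj] (hG : G.Connected)
    (M : ℕ)
    (γ : ℝ) (hγ : γ ∈ Set.Ioo (0 : ℝ) 1)
    (s : Fin M → ℝ) (hs_inj : Function.Injective s)
    (p₀ : ℕ) (hp₀ : p₀ + 1 ≤ M)
    {Ω : Type*} [MeasurableSpace Ω] (μ : Measure Ω) [IsProbabilityMeasure μ]
    (c : ℕ → Ω → Sym2 (Fin N) → Fin M)
    (hc_meas : ∀ t, Measurable (c t))
    (hc_indep : iIndepFun c μ)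
    (hc_proper : ∀ t, ∀ᵐ ω ∂μ, ∀ e ∈ G.edgeSet, ∀ e' ∈ G.edgeSet, e ≠ e' →
      (∃ v : Fin N, v ∈ e ∧ v ∈ e') → c t ω e ≠ c t ω e')
    (hc_unif : ∀ t, ∀ e ∈ G.edgeSet, ∀ k : Fin M,
      μ {ω | c t ω e = k} = 1 / (M : ENNReal))
    (r : ℕ → Ω → Fin N → Fin M → ℝ)
    (r0 : Fin N → Fin M → ℝ) (hr_init : ∀ ω, r 0 ω = r0)
    (hr0_span : ∀ i : Fin N, r0 i ∈ Submodule.span ℝ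
      (Set.range fun ℓ : Fin (p₀ + 1) => fun k : Fin M => vandMat M p₀ s k ℓ))
    (hr_upd : ∀ (t : ℕ) (ω : Ω) (i : Fin N),
      r (t + 1) ω i = (projMat M p₀ s).mulVec
        (fun k => r t ω i k + γ * ∑ j ∈ G.neighborFinset i,
          (if c t ω s(i, j) = k then (1 : ℝ) else 0) * (r t ω j k - r t ω i k))) :
    ∀ᵐ ω ∂μ, ∀ (i : Fin N) (k : Fin M),
      Tendsto (fun t => r t ω i k) atTop (nhds ((N : ℝ)⁻¹ * ∑ j, r0 j k)) := by
  have hN : (N : ℝ) ≠ 0 := Nat.cast_ne_zero.mpr (Fin.pos_iff_nonempty.mpr hG.nonempty).ne'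
  have : Nonempty (Fin M) := ⟨⟨0, by omega⟩⟩
  set T := projMat M p₀ s
  set a : Fin M → ℝ := fun k => (N : ℝ)⁻¹ * ∑ j, r0 j k
  have ha_eq : a = (N : ℝ)⁻¹ • ∑ i, r0 i := by ext k; simp [a, Finset.sum_apply]
  have hTa : T *ᵥ a = a := projMat_mulVec_of_mem_span hs_inj hp₀
    (ha_eq ▸ Submodule.smul_mem _ _ (Submodule.sum_mem _ fun i _ => hr0_span i))
  have hr_succ : ∀ t ω, r (t + 1) ω = G.encodedStep T γ (c t ω) (r t ω) :=
    fun t ω => funext (hr_upd t ω)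
  have hsum : ∀ t ω, ∑ i, r t ω i = Fintype.card (Fin N) • a := by
    intro t
    induction t with
    | zero => intro ω; rw [hr_init, ha_eq, Fintype.card_fin, ← Nat.cast_smul_eq_nsmul ℝ,
        smul_smul, mul_inv_cancel₀ hN, one_smul]
    | succ t ih => intro ω; rw [hr_succ, G.sum_encodedStep, ih, Matrix.mulVec_smul, hTa]
  obtain ⟨l, hl, hgap⟩ := hG.exists_pos_mul_sqDeviation_le (K := Fin M)
  filter_upwards [ae_tendsto_sqDeviation_zero hc_indep hc_meas hc_proper
    (by simpa using hc_unif) projMat_transpose (projMat_mul_self hs_inj hp₀) hTa hγ hl hr_init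
    hr_succ fun t ω => hgap _ _ (hsum t ω)] with ω hω i k
  exact tendsto_apply_of_tendsto_sqDeviation hω i k

/-- **channel-wise average consensus, common privacy degree.**
With `G` connected on `{1, …, N}`, `M ≥ 2 d_max − 1`, `γ ∈ (0,1)`, distinct nonzero keys
`s_1, …, s_M`, common degree `p₀ ≤ M − 1`, independent uniformly-distributed random proper
edge colorings `c_t`, and agents updating their encoded states `r_i(t) ∈ ℝ^M` by a
channel-wise consensus step followed by the projection `T̄_{p₀}`, starting in the column
span of `Φ_{p₀}`, one has, almost surely, `r_i^k(t) → (1/N) Σ_j r_j^k(0)` for every agent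
`i` and channel `k`. -/
theorem encoded_states_average_consensus
    {N : ℕ} (G : SimpleGraph (Fin N)) [DecidableRel G.Adj] (hG : G.Connected)
    (M : ℕ) (hM : 2 * G.maxDegree ≤ M + 1)
    (γ : ℝ) (hγ : γ ∈ Set.Ioo (0 : ℝ) 1)
    (s : Fin M → ℝ) (hs_inj : Function.Injective s) (hs_ne : ∀ k, s k ≠ 0)
    (p₀ : ℕ) (hp₀ : p₀ + 1 ≤ M)
    {Ω : Type*} [MeasurableSpace Ω] (μ : Measure Ω) [IsProbabilityMeasure μ]
    (c : ℕ → Ω → Sym2 (Fin N) → Fin M)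
    (hc_meas : ∀ t, Measurable (c t))
    (hc_indep : iIndepFun c μ)
    (hc_proper : ∀ t, ∀ᵐ ω ∂μ, ∀ e ∈ G.edgeSet, ∀ e' ∈ G.edgeSet, e ≠ e' →
      (∃ v : Fin N, v ∈ e ∧ v ∈ e') → c t ω e ≠ c t ω e')
    (hc_unif : ∀ t, ∀ e ∈ G.edgeSet, ∀ k : Fin M,
      μ {ω | c t ω e = k} = 1 / (M : ENNReal))
    (r : ℕ → Ω → Fin N → Fin M → ℝ)
    (r0 : Fin N → Fin M → ℝ) (hr_init : ∀ ω, r 0 ω = r0)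
    (hr0_span : ∀ i : Fin N, r0 i ∈ Submodule.span ℝ
      (Set.range fun ℓ : Fin (p₀ + 1) => fun k : Fin M => vandMat M p₀ s k ℓ))
    (hr_upd : ∀ (t : ℕ) (ω : Ω) (i : Fin N),
      r (t + 1) ω i = (projMat M p₀ s).mulVec
        (fun k => r t ω i k + γ * ∑ j ∈ G.neighborFinset i,
          (if c t ω s(i, j) = k then (1 : ℝ) else 0) * (r t ω j k - r t ω i k))) :
    ∀ᵐ ω ∂μ, ∀ (i : Fin N) (k : Fin M),
      Tendsto (fun t => r t ω i k) atTop (nhds ((N : ℝ)⁻¹ * ∑ j, r0 j k)) :=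
  encoded_states_average_consensus_general G hG M γ hγ s hs_inj p₀ hp₀ μ c hc_meas hc_indep
    hc_proper hc_unif r r0 hr_init hr0_span hr_upd
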